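/- The infinite series ∑_{k=1}^∞ (k!)²·(3k+2)/(2k+1)! converges to 2π/(3√3). -/

import Mathlib

/-!
With `C k` the central binomial coefficient, `(2k+1)! = (2k+1) C k (k!)²` and
`(k+1) C (k+1) = 2 (2k+1) C k` give
`(k!)² (3k+2) / (2k+1)! = 2 (1 / C k - 1 / C (k+1)) + (k!)² / (2k+1)!`.
The first part telescopes to `2 / C 0 = 2`. The second is the Beta integral `∫₀¹ (x(1-x))^k`;
summing the geometric series under the integral leaves `∫₀¹ dx / (1 - x + x²) = 2π / (3√3)`.
The term `k = 0`, absent from the series, is exactly `2`.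
-/

open Filter Finset Real
open scoped Nat Topology

theorem integral_pow_mul_one_sub_pow (m n : ℕ) :
    ∫ x in (0 : ℝ)..1, x ^ m * (1 - x) ^ n = (m ! * n ! : ℝ) / (m + n + 1)! := by
  have hbeta := Complex.betaIntegral_eval_nat_add_one_right (u := m + 1) (by simp; positivity) n
  have hprod : (m ! : ℂ) * ∏ j ∈ range (n + 1), ((m : ℂ) + 1 + j) = (m + n + 1)! := by
    rw [add_assoc, ← Nat.factorial_mul_ascFactorial m (n + 1), Nat.ascFactorial_eq_prod_range]
    push_cast
    rfl
  have hint : Complex.betaIntegral (m + 1) (n + 1) =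
      ((∫ x in (0 : ℝ)..1, x ^ m * (1 - x) ^ n : ℝ) : ℂ) := by
    rw [Complex.betaIntegral, ← intervalIntegral.integral_ofReal]
    refine intervalIntegral.integral_congr fun x _ => ?_
    simp only [add_sub_cancel_right, Complex.cpow_natCast]
    push_cast
    rfl
  apply Complex.ofReal_injective
  rw [← hint, hbeta]
  push_cast
  rw [← hprod]
  have : (m ! : ℂ) ≠ 0 := Nat.cast_ne_zero.2 m.factorial_ne_zero
  field_simp

theorem integral_inv_one_sub_mul_one_sub :
    ∫ x in (0 : ℝ)..1, (1 - x * (1 - x))⁻¹ = 2 * π / (3 * √3) := by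
  have h3 : √3 ^ 2 = 3 := sq_sqrt (by norm_num)
  have hc : √3 / 2 ≠ 0 := by positivity
  -- completing the square: `1 - x (1 - x) = 3/4 (1 + u²)` with `u = (2x - 1) / √3`
  have hsq (x : ℝ) : (1 - x * (1 - x))⁻¹ = 4 / 3 * (1 + (x / (√3 / 2) - (√3)⁻¹) ^ 2)⁻¹ := by
    have : 1 - x * (1 - x) = 3 / 4 * (1 + (x / (√3 / 2) - (√3)⁻¹) ^ 2) := by
      field_simp
      linear_combination (2 * x - 1) ^ 2 * h3
    rw [this, mul_inv, inv_div]
  simp_rw [hsq, intervalIntegral.integral_const_mul,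
    intervalIntegral.integral_comp_div_sub (fun u => (1 + u ^ 2)⁻¹) hc, integral_inv_one_add_sq]
  have e1 : 1 / (√3 / 2) - (√3)⁻¹ = (√3)⁻¹ := by field_simp; linarith
  have e0 : 0 / (√3 / 2) - (√3)⁻¹ = -(√3)⁻¹ := by ring
  rw [e1, e0, arctan_neg, arctan_inv_sqrt_three, smul_eq_mul]
  field_simp
  linear_combination 8 * h3

theorem hasSum_factorial_sq_div_factorial :
    HasSum (fun k : ℕ => (k ! : ℝ) ^ 2 / (2 * k + 1)!) (2 * π / (3 * √3)) := by
  have hbeta (k : ℕ) :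
      (k ! : ℝ) ^ 2 / (2 * k + 1)! = ∫ x in (0 : ℝ)..1, (x * (1 - x)) ^ k := by
    simp_rw [mul_pow, integral_pow_mul_one_sub_pow, two_mul, sq]
  simp_rw [hbeta, ← integral_inv_one_sub_mul_one_sub]
  have hIcc : ∀ x ∈ Set.uIoc (0 : ℝ) 1, 0 ≤ x * (1 - x) ∧ x * (1 - x) ≤ 1 / 4 := by
    intro x hx
    rw [Set.uIoc_of_le zero_le_one] at hx
    exact ⟨mul_nonneg hx.1.le (sub_nonneg.2 hx.2), by nlinarith [sq_nonneg (x - 1 / 2)]⟩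
  refine intervalIntegral.hasSum_integral_of_dominated_convergence (fun k _ => (1 / 4 : ℝ) ^ k)
    (fun k => by fun_prop) (fun k => MeasureTheory.ae_of_all _ fun x hx => ?_)
    (MeasureTheory.ae_of_all _ fun _ _ => summable_geometric_of_lt_one (by norm_num) (by norm_num))
    intervalIntegrable_const (MeasureTheory.ae_of_all _ fun x hx => ?_)
  · obtain ⟨h0, h4⟩ := hIcc x hx
    rw [norm_pow, Real.norm_of_nonneg h0]
    exact pow_le_pow_left₀ h0 h4 k
  · obtain ⟨h0, h4⟩ := hIcc x hx
    exact hasSum_geometric_of_lt_one h0 (by linarith)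

theorem hasSum_sub_succ_of_antitone {f : ℕ → ℝ} {a : ℝ} (hf : Antitone f)
    (h : Tendsto f atTop (𝓝 a)) : HasSum (fun n => f n - f (n + 1)) (f 0 - a) := by
  rw [hasSum_iff_tendsto_nat_of_nonneg fun n => sub_nonneg.2 (hf n.le_succ)]
  simpa only [Finset.sum_range_sub'] using tendsto_const_nhds.sub h

theorem hasSum_inv_centralBinom_sub_succ :
    HasSum (fun n : ℕ => (n.centralBinom : ℝ)⁻¹ - ((n + 1).centralBinom : ℝ)⁻¹) 1 := by
  have hmono : Monotone fun n : ℕ => (n.centralBinom : ℝ) :=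
    Nat.mono_cast.comp Nat.centralBinom_strictMono.monotone
  simpa using hasSum_sub_succ_of_antitone
    (fun m n hmn => inv_anti₀ (Nat.cast_pos.2 (Nat.centralBinom_pos m)) (hmono hmn))
    (tendsto_inv_atTop_zero.comp
      (tendsto_natCast_atTop_atTop.comp Nat.centralBinom_strictMono.tendsto_atTop))

theorem factorial_sq_mul_div_factorial_eq (k : ℕ) :
    (k ! : ℝ) ^ 2 * (3 * k + 2) / (2 * k + 1)! =
      2 * ((k.centralBinom : ℝ)⁻¹ - ((k + 1).centralBinom : ℝ)⁻¹) +
        (k ! : ℝ) ^ 2 / (2 * k + 1)! := by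
  have hsucc : ((k + 1 : ℕ) : ℝ) * (k + 1).centralBinom = 2 * (2 * k + 1) * k.centralBinom := by
    exact_mod_cast Nat.succ_mul_centralBinom_succ k
  have hfact : (2 * k + 1)! = (2 * k + 1) * k.centralBinom * k ! ^ 2 := by
    rw [Nat.factorial_succ, Nat.centralBinom, two_mul, ← Nat.add_choose_mul_factorial_mul_factorial]
    ring
  have : (k.centralBinom : ℝ) ≠ 0 := Nat.cast_ne_zero.2 (Nat.centralBinom_ne_zero k)
  have : ((k + 1).centralBinom : ℝ) ≠ 0 := Nat.cast_ne_zero.2 (Nat.centralBinom_ne_zero _)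
  rw [hfact]
  push_cast at hsucc ⊢
  field_simp
  linear_combination -hsucc

theorem stmt8 :
    Tendsto (fun N => ∑ k ∈ Ico 1 N,
      ((Nat.factorial k : ℝ))^2 * (3 * (k : ℝ) + 2) / (Nat.factorial (2 * k + 1) : ℝ))
      atTop (nhds (2 * Real.pi / (3 * Real.sqrt 3))) := by
  have hsum : HasSum (fun k : ℕ => (k ! : ℝ) ^ 2 * (3 * k + 2) / (2 * k + 1)!)
      (2 * 1 + 2 * π / (3 * √3)) := by
    simp_rw [factorial_sq_mul_div_factorial_eq]
    exact (hasSum_inv_centralBinom_sub_succ.mul_left 2).add hasSum_factorial_sq_div_factorial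
  have htail : HasSum (fun k : ℕ => ((k + 1) ! : ℝ) ^ 2 * (3 * (k + 1 : ℕ) + 2) / (2 * (k + 1) + 1)!)
      (2 * π / (3 * √3)) := by
    simpa using (hasSum_nat_add_iff' 1).mpr hsum
  refine (htail.tendsto_sum_nat.comp (tendsto_sub_atTop_nat 1)).congr fun N => ?_
  simp [Finset.sum_Ico_eq_sum_range, add_comm]
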